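/- arXiv:2010.14313 — 3 statements merged into one kernel-verified Lean document; each statement's English description precedes it below -/
import Mathlib

section
/- Let F : A → C and G : B → C be functors between groupoids, where F is essentially surjective and full, and G is an isofibration. Then the pullback of F along G (the strict fiber product of categories) is essentially surjective and full. -/
open CategoryTheory

/-- A functor between groupoids is an isofibration if every (iso)morphism out of an
object in the image lifts. -/
def Isofib {B C : Type*} [Groupoid B] [Groupoid C] (G : B ⥤ C) : Prop :=
  ∀ (b : B) (c : C) (γ : G.obj b ⟶ c),
    ∃ (b' : B) (β : b ⟶ b') (e : G.obj b' = c), G.map β = γ ≫ eqToHom e.symm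

/-- The strict fiber product of categories along `F : A ⥤ C` and `G : B ⥤ C`. -/
structure Pb {A B C : Type*} [Category A] [Category B] [Category C]
    (F : A ⥤ C) (G : B ⥤ C) where
  a : A
  b : B
  w : F.obj a = G.obj b

instance Pb.category {A B C : Type*} [Category A] [Category B] [Category C]
    (F : A ⥤ C) (G : B ⥤ C) : Category (Pb F G) where
  Hom x y := {p : (x.a ⟶ y.a) × (x.b ⟶ y.b) //
    F.map p.1 = eqToHom x.w ≫ G.map p.2 ≫ eqToHom y.w.symm}
  id x := ⟨(𝟙 _, 𝟙 _), by simp⟩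
  comp p q := ⟨(p.1.1 ≫ q.1.1, p.1.2 ≫ q.1.2), by dsimp; rw [F.map_comp, p.2, q.2]; simp⟩
  id_comp := by intros; apply Subtype.ext; dsimp; simp
  comp_id := by intros; apply Subtype.ext; dsimp; simp
  assoc := by intros; apply Subtype.ext; dsimp; simp

/-- Second projection of the strict fiber product: the pullback of `F` along `G`. -/
def Pb.proj {A B C : Type*} [Category A] [Category B] [Category C]
    (F : A ⥤ C) (G : B ⥤ C) : Pb F G ⥤ B where
  obj x := x.b
  map p := p.1.2
  map_id := by intros; rfl
  map_comp := by intros; rfl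


theorem pullback_essSurj_full {A B C : Type*} [Groupoid A] [Groupoid B] [Groupoid C]
    (F : A ⥤ C) (G : B ⥤ C) (hFes : F.EssSurj) (hFf : F.Full) (hG : Isofib G) :
    (Pb.proj F G).EssSurj ∧ (Pb.proj F G).Full := by
  constructor
  · constructor
    intro b
    obtain ⟨a, ⟨φ⟩⟩ := hFes.mem_essImage (G.obj b)
    obtain ⟨b', β, e, hβ⟩ := hG b (F.obj a) φ.inv
    refine ⟨⟨a, b', e.symm⟩, ⟨?_⟩⟩
    exact Groupoid.isoEquivHom _ _ |>.symm (Groupoid.inv β)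
  · constructor
    intro x y g
    exact ⟨⟨⟨(hFf.1 (eqToHom x.w ≫ G.map g ≫ eqToHom y.w.symm)).choose, g⟩,
      (hFf.1 (eqToHom x.w ≫ G.map g ≫ eqToHom y.w.symm)).choose_spec⟩, rfl⟩
end

section
/- Let F : A → B and G : B → C be functors between groupoids such that H = G ∘ F is an isofibration. Then F is essentially surjective if and only if for every object c of C, the induced functor between the strict fibers H⁻¹(c) → G⁻¹(c) (i.e. the pullbacks of A and B along the functor 1 → C picking out c) is essentially surjective. -/
/-!
If `F` is essentially surjective and `y` lies over `c`, pick `F a ≅ y`; lifting the image of this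
iso under `G` along the isofibration `F ⋙ G` gives `a ≅ a'` with `a'` over `c`, and the composite
`F a' ≅ F a ≅ y` lies over the identity of `c`. Conversely every `b` lies in the fiber over
`G b`, and an iso in a strict fiber is in particular an iso in `B`.
-/

open CategoryTheory

/-- The strict fiber of a functor `K : D ⥤ C` over an object `c : C`. -/
structure StrictFiber {D C : Type*} [Category D] [Category C] (K : D ⥤ C) (c : C) where
  d : D
  w : K.obj d = c

instance StrictFiber.category {D C : Type*} [Category D] [Category C] (K : D ⥤ C) (c : C) :
    Category (StrictFiber K c) where
  Hom x y := {f : x.d ⟶ y.d // K.map f = eqToHom (x.w.trans y.w.symm)}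
  id x := ⟨𝟙 _, by simp⟩
  comp f g := ⟨f.1 ≫ g.1, by rw [K.map_comp, f.2, g.2]; simp⟩
  id_comp := by intros; apply Subtype.ext; dsimp; simp
  comp_id := by intros; apply Subtype.ext; dsimp; simp
  assoc := by intros; apply Subtype.ext; dsimp; simp

/-- The functor induced by `F` between the strict fibers of `F ⋙ G` and `G` over `c`. -/
def fiberMap {A B C : Type*} [Category A] [Category B] [Category C]
    (F : A ⥤ B) (G : B ⥤ C) (c : C) : StrictFiber (F ⋙ G) c ⥤ StrictFiber G c where
  obj x := ⟨F.obj x.d, x.w⟩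
  map f := ⟨F.map f.1, f.2⟩
  map_id := by intros; apply Subtype.ext; exact F.map_id _
  map_comp := by intros; apply Subtype.ext; exact F.map_comp _ _

namespace StrictFiber

variable {D C : Type*} [Category D] [Category C]

def forget (K : D ⥤ C) (c : C) : StrictFiber K c ⥤ D where
  obj x := x.d
  map f := f.1

def isoMk {K : D ⥤ C} {c : C} {x y : StrictFiber K c} (e : x.d ≅ y.d)
    (h : K.map e.hom = eqToHom (x.w.trans y.w.symm)) : x ≅ y where
  hom := ⟨e.hom, h⟩
  inv := ⟨e.inv, by
    rw [← cancel_epi (K.map e.hom), ← K.map_comp, e.hom_inv_id, K.map_id, h, eqToHom_trans,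
      eqToHom_refl]⟩
  hom_inv_id := Subtype.ext e.hom_inv_id
  inv_hom_id := Subtype.ext e.inv_hom_id

end StrictFiber

theorem Isofib.exists_iso_to_fiber {A C : Type*} [Groupoid A] [Groupoid C] {H : A ⥤ C}
    (hH : Isofib H) (a : A) {c : C} (γ : H.obj a ⟶ c) :
    ∃ (a' : StrictFiber H c) (β : a ≅ a'.d), H.map β.hom = γ ≫ eqToHom a'.w.symm := by
  obtain ⟨a', β, w, hβ⟩ := hH a c γ
  exact ⟨⟨a', w⟩, asIso β, hβ⟩

theorem fiberMap_essSurj {A B C : Type*} [Groupoid A] [Category B] [Groupoid C]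
    {F : A ⥤ B} {G : B ⥤ C} (hIso : Isofib (F ⋙ G)) [F.EssSurj] (c : C) :
    (fiberMap F G c).EssSurj where
  mem_essImage y := by
    let e : F.obj (F.objPreimage y.d) ≅ y.d := F.objObjPreimageIso y.d
    obtain ⟨a', β, hβ⟩ := hIso.exists_iso_to_fiber _ (G.map e.hom ≫ eqToHom y.w)
    refine ⟨a', ⟨StrictFiber.isoMk (F.mapIso β.symm ≪≫ e) ?_⟩⟩
    have hvert : G.map (F.map β.inv) ≫ G.map e.hom = eqToHom (a'.w.trans y.w.symm) := by
      rw [← Functor.comp_map, ← Functor.mapIso_inv, Iso.inv_comp_eq, Functor.mapIso_hom, hβ]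
      simp
    exact (G.map_comp _ _).trans hvert

theorem essSurj_of_forall_fiberMap_essSurj {A B C : Type*} [Category A] [Category B]
    [Category C] {F : A ⥤ B} {G : B ⥤ C} (h : ∀ c : C, (fiberMap F G c).EssSurj) :
    F.EssSurj where
  mem_essImage b :=
    let e := (fiberMap F G (G.obj b)).objObjPreimageIso ⟨b, rfl⟩
    ⟨_, ⟨(StrictFiber.forget G (G.obj b)).mapIso e⟩⟩

theorem essSurj_iff_essSurj_on_fibers {A B C : Type*} [Groupoid A] [Groupoid B] [Groupoid C]
    (F : A ⥤ B) (G : B ⥤ C) (hIso : Isofib (F ⋙ G)) :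
    F.EssSurj ↔ ∀ c : C, (fiberMap F G c).EssSurj :=
  ⟨fun _ => fiberMap_essSurj hIso, essSurj_of_forall_fiberMap_essSurj⟩
end

section
/- Let (Y^X, ε_Y) be a weak (respectively strong) homotopy exponential for X and Y in a path category C, and let h : Y → Z be a weak equivalence. Then (Y^X, h ∘ ε_Y) is a weak (respectively strong) homotopy exponential for X and Z. -/
open CategoryTheory

universe v u

/-- A path category (category of fibrant objects in the sense of Van den Berg–Moerdijk),
with chosen pullbacks along fibrations and chosen path objects. -/
class PathCat (C : Type u) [Category.{v} C] where
  /-- the class of fibrations -/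
  Fib : ∀ {X Y : C}, (X ⟶ Y) → Prop
  /-- the class of weak equivalences -/
  Weq : ∀ {X Y : C}, (X ⟶ Y) → Prop
  /-- fibrations are closed under composition -/
  fib_comp : ∀ {X Y Z : C} {f : X ⟶ Y} {g : Y ⟶ Z}, Fib f → Fib g → Fib (f ≫ g)
  /-- chosen pullback of a fibration `g` along `f` -/
  pb : ∀ {X Y Z : C} (f : X ⟶ Z) (g : Y ⟶ Z), Fib g → C
  pb₁ : ∀ {X Y Z : C} (f : X ⟶ Z) (g : Y ⟶ Z) (hg : Fib g), pb f g hg ⟶ X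
  pb₂ : ∀ {X Y Z : C} (f : X ⟶ Z) (g : Y ⟶ Z) (hg : Fib g), pb f g hg ⟶ Y
  pb_comm : ∀ {X Y Z : C} (f : X ⟶ Z) (g : Y ⟶ Z) (hg : Fib g),
    pb₁ f g hg ≫ f = pb₂ f g hg ≫ g
  /-- the pullback of a fibration is a fibration -/
  pb_fib : ∀ {X Y Z : C} (f : X ⟶ Z) (g : Y ⟶ Z) (hg : Fib g), Fib (pb₁ f g hg)
  pb_lift : ∀ {X Y Z T : C} (f : X ⟶ Z) (g : Y ⟶ Z) (hg : Fib g)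
    (a : T ⟶ X) (b : T ⟶ Y), a ≫ f = b ≫ g → (T ⟶ pb f g hg)
  pb_lift₁ : ∀ {X Y Z T : C} (f : X ⟶ Z) (g : Y ⟶ Z) (hg : Fib g)
    (a : T ⟶ X) (b : T ⟶ Y) (w : a ≫ f = b ≫ g),
    pb_lift f g hg a b w ≫ pb₁ f g hg = a
  pb_lift₂ : ∀ {X Y Z T : C} (f : X ⟶ Z) (g : Y ⟶ Z) (hg : Fib g)
    (a : T ⟶ X) (b : T ⟶ Y) (w : a ≫ f = b ≫ g),
    pb_lift f g hg a b w ≫ pb₂ f g hg = b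
  pb_lift_unique : ∀ {X Y Z T : C} (f : X ⟶ Z) (g : Y ⟶ Z) (hg : Fib g)
    (t t' : T ⟶ pb f g hg), t ≫ pb₁ f g hg = t' ≫ pb₁ f g hg →
    t ≫ pb₂ f g hg = t' ≫ pb₂ f g hg → t = t'
  /-- the pullback of an acyclic fibration is an acyclic fibration -/
  pb_weq : ∀ {X Y Z : C} (f : X ⟶ Z) (g : Y ⟶ Z) (hg : Fib g), Weq g → Weq (pb₁ f g hg)
  /-- weak equivalences satisfy 2-out-of-6 -/
  two_of_six : ∀ {X Y Z W : C} (f : X ⟶ Y) (g : Y ⟶ Z) (h : Z ⟶ W),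
    Weq (f ≫ g) → Weq (g ≫ h) → Weq f ∧ Weq g ∧ Weq h ∧ Weq (f ≫ g ≫ h)
  /-- isomorphisms are acyclic fibrations -/
  iso_fib : ∀ {X Y : C} (f : X ⟶ Y) [IsIso f], Fib f
  iso_weq : ∀ {X Y : C} (f : X ⟶ Y) [IsIso f], Weq f
  /-- every acyclic fibration has a section -/
  acyc_section : ∀ {X Y : C} (f : X ⟶ Y), Fib f → Weq f → ∃ s : Y ⟶ X, s ≫ f = 𝟙 Y
  /-- terminal object; every object is fibrant -/
  term : C
  toTerm : ∀ X : C, X ⟶ term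
  toTerm_unique : ∀ {X : C} (f : X ⟶ term), f = toTerm X
  toTerm_fib : ∀ X : C, Fib (toTerm X)
  /-- chosen path object of each object -/
  P : C → C
  pr : ∀ X : C, X ⟶ P X
  ps : ∀ X : C, P X ⟶ X
  pt : ∀ X : C, P X ⟶ X
  pr_ps : ∀ X : C, pr X ≫ ps X = 𝟙 X
  pr_pt : ∀ X : C, pr X ≫ pt X = 𝟙 X
  pr_weq : ∀ X : C, Weq (pr X)
  /-- `(s,t) : PX ⟶ X × X` is a fibration -/
  pst_fib : ∀ X : C, Fib (pb_lift (toTerm X) (toTerm X) (toTerm_fib X) (ps X) (pt X)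
    ((toTerm_unique _).trans (toTerm_unique _).symm))

namespace PathCat

variable {C : Type u} [Category.{v} C] [PathCat C]

/-- the chosen binary product `X × Y` -/
def prodObj (X Y : C) : C := pb (toTerm X) (toTerm Y) (toTerm_fib Y)

def pfst (X Y : C) : prodObj X Y ⟶ X := pb₁ _ _ _

def psnd (X Y : C) : prodObj X Y ⟶ Y := pb₂ _ _ _

def plift {T X Y : C} (a : T ⟶ X) (b : T ⟶ Y) : T ⟶ prodObj X Y :=
  pb_lift _ _ _ a b ((toTerm_unique _).trans (toTerm_unique _).symm)

@[simp] lemma plift_fst {T X Y : C} (a : T ⟶ X) (b : T ⟶ Y) :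
    plift a b ≫ pfst X Y = a := pb_lift₁ _ _ _ _ _ _

@[simp] lemma plift_snd {T X Y : C} (a : T ⟶ X) (b : T ⟶ Y) :
    plift a b ≫ psnd X Y = b := pb_lift₂ _ _ _ _ _ _

/-- the product of two morphisms -/
def prodMap {X X' Y Y' : C} (f : X ⟶ X') (g : Y ⟶ Y') : prodObj X Y ⟶ prodObj X' Y' :=
  plift (pfst X Y ≫ f) (psnd X Y ≫ g)

/-- the map `(s,t) : PX ⟶ X × X` -/
def pst (X : C) : P X ⟶ prodObj X X := plift (ps X) (pt X)

lemma pstFib (X : C) : Fib (pst (C := C) X) := pst_fib X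

/-- a (not necessarily chosen) path object for `Y` -/
structure PathObj (Y : C) where
  ob : C
  r : Y ⟶ ob
  s : ob ⟶ Y
  t : ob ⟶ Y
  rs : r ≫ s = 𝟙 Y
  rt : r ≫ t = 𝟙 Y
  rweq : Weq r
  stfib : Fib (plift s t)

/-- homotopy witnessed by a given path object -/
def HomotopicVia {X Y : C} (Q : PathObj Y) (f g : X ⟶ Y) : Prop :=
  ∃ H : X ⟶ Q.ob, H ≫ Q.s = f ∧ H ≫ Q.t = g

/-- homotopy (via the chosen path object) -/
def Homotopic {X Y : C} (f g : X ⟶ Y) : Prop :=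
  ∃ H : X ⟶ P Y, H ≫ ps Y = f ∧ H ≫ pt Y = g

/-- a fiberwise path object for a fibration `p : E ⟶ B` -/
structure FibPathObj {E B : C} (p : E ⟶ B) (hp : Fib p) where
  ob : C
  r : E ⟶ ob
  s : ob ⟶ E
  t : ob ⟶ E
  rs : r ≫ s = 𝟙 E
  rt : r ≫ t = 𝟙 E
  sp : s ≫ p = t ≫ p
  rweq : Weq r
  stfib : Fib (pb_lift p p hp s t sp)

/-- fiberwise homotopy over the base of the fibration `p` -/
def FibHomotopic {E B T : C} (p : E ⟶ B) (hp : Fib p) (u v : T ⟶ E) : Prop :=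
  ∃ Q : FibPathObj p hp, ∃ H : T ⟶ Q.ob, H ≫ Q.s = u ∧ H ≫ Q.t = v

/-- homotopies from `f` to `g` (witnesses via the chosen path object) -/
def Htpy {X Y : C} (f g : X ⟶ Y) : Type v :=
  {H : X ⟶ P Y // H ≫ ps Y = f ∧ H ≫ pt Y = g}

/-- homotopy classes of homotopies: homotopies modulo fiberwise homotopy over `Y × Y`;
these are the arrows of the hom-groupoid `C(X,Y)`. -/
def HCls {X Y : C} (f g : X ⟶ Y) : Type v :=
  Quot (fun H K : Htpy f g => FibHomotopic (pst Y) (pstFib Y) H.1 K.1)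

end PathCat

namespace PathCat

variable {C : Type u} [Category.{v} C] [PathCat C]

/-- Weak homotopy exponential: the functor `C(T, E) ⟶ C(T × X, Y)`, `v ↦ ε ∘ (v × 1)`,
is essentially surjective for every `T`. -/
def IsWeakExp (X Y E : C) (ε : prodObj E X ⟶ Y) : Prop :=
  ∀ (T : C) (u : prodObj T X ⟶ Y), ∃ v : T ⟶ E, Homotopic (prodMap v (𝟙 X) ≫ ε) u

/-- Fullness of the functor `C(T, E) ⟶ C(T × X, Y)`: every homotopy between images is,
up to fiberwise homotopy, the image of a homotopy (the image on homotopies being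
computed via any comparison filler `θ : PE × PX ⟶ P(E × X)` and any filler `Pε`). -/
def ExpFull (X Y E : C) (ε : prodObj E X ⟶ Y) : Prop :=
  ∀ (T : C)
    (θ : prodObj (P E) (P X) ⟶ P (prodObj E X))
    (θs : θ ≫ ps (prodObj E X) = prodMap (ps E) (ps X))
    (θt : θ ≫ pt (prodObj E X) = prodMap (pt E) (pt X))
    (θr : FibHomotopic (pst (prodObj E X)) (pstFib (prodObj E X))
      (prodMap (pr E) (pr X) ≫ θ) (pr (prodObj E X)))
    (Pε : P (prodObj E X) ⟶ P Y)
    (Pεs : Pε ≫ ps Y = ps (prodObj E X) ≫ ε) (Pεt : Pε ≫ pt Y = pt (prodObj E X) ≫ ε)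
    (Pεr : FibHomotopic (pst Y) (pstFib Y) (pr (prodObj E X) ≫ Pε) (ε ≫ pr Y))
    (v v' : T ⟶ E) (H : prodObj T X ⟶ P Y)
    (Hs : H ≫ ps Y = prodMap v (𝟙 X) ≫ ε) (Ht : H ≫ pt Y = prodMap v' (𝟙 X) ≫ ε),
    ∃ K : T ⟶ P E, K ≫ ps E = v ∧ K ≫ pt E = v' ∧
      FibHomotopic (pst Y) (pstFib Y)
        (plift (pfst T X ≫ K) (psnd T X ≫ pr X) ≫ θ ≫ Pε) H

/-- Strong homotopy exponential: the canonical functor is essentially surjective and full. -/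
def IsStrongExp (X Y E : C) (ε : prodObj E X ⟶ Y) : Prop :=
  IsWeakExp X Y E ε ∧ ExpFull X Y E ε

/-- Ordinary homotopy exponential: the canonical functor is essentially surjective and
essentially injective. -/
def IsOrdExp (X Y E : C) (ε : prodObj E X ⟶ Y) : Prop :=
  IsWeakExp X Y E ε ∧
    ∀ (T : C) (v v' : T ⟶ E),
      Homotopic (prodMap v (𝟙 X) ≫ ε) (prodMap v' (𝟙 X) ≫ ε) → Homotopic v v'

end PathCat

/-! Postcomposition with a weak equivalence `h : Y ⟶ Z` is an equivalence of hom-groupoids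
`C(T, Y) ⥤ C(T, Z)`, and the canonical functor of `(E, ε ≫ h)` is that of `(E, ε)` followed by
it, so essential surjectivity and fullness carry over. Essential surjectivity: a map into `Z`
lifts through the acyclic fibration `M_h ⟶ Z` out of the mapping path object of `h`. Fullness:
the comparison `P Y ⟶ (Y × Y) ×_{Z × Z} P Z` is a weak equivalence between fibrations over
`Y × Y`, hence a fiberwise homotopy equivalence, so paths between `h`-images lift. Since any two
actions of `ε ≫ h` on paths are fiberwise homotopic, the one prescribed in `ExpFull` may be
replaced by an action of `ε` followed by one of `h`. -/

namespace PathCat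

open Limits

variable {C : Type u} [Category.{v} C] [PathCat C]

theorem weq_id (X : C) : Weq (𝟙 X) := iso_weq _

theorem weq_comp {X Y Z : C} {f : X ⟶ Y} {g : Y ⟶ Z} (hf : Weq f) (hg : Weq g) :
    Weq (f ≫ g) := by
  simpa using (two_of_six f (𝟙 Y) g (by simpa using hf) (by simpa using hg)).2.2.2

theorem weq_of_precomp {X Y Z : C} {f : X ⟶ Y} {g : Y ⟶ Z} (hf : Weq f)
    (hfg : Weq (f ≫ g)) : Weq g :=
  (two_of_six (𝟙 X) f g (by simpa using hf) (by simpa using hfg)).2.2.1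

theorem weq_of_postcomp {X Y Z : C} {f : X ⟶ Y} {g : Y ⟶ Z} (hg : Weq g)
    (hfg : Weq (f ≫ g)) : Weq f :=
  (two_of_six f g (𝟙 Z) hfg (by simpa using hg)).1

attribute [simp] pb_lift₁ pb_lift₂ pr_ps pr_pt

section Pullbacks

variable {X Y Z W : C} (f : X ⟶ Z) (g : Y ⟶ Z) (hg : Fib g)

@[simp] theorem pb_lift₁_assoc {T : C} (a : T ⟶ X) (b : T ⟶ Y) (w : a ≫ f = b ≫ g)
    (k : X ⟶ W) : pb_lift f g hg a b w ≫ pb₁ f g hg ≫ k = a ≫ k := by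
  rw [← Category.assoc, pb_lift₁]

@[simp] theorem pb_lift₂_assoc {T : C} (a : T ⟶ X) (b : T ⟶ Y) (w : a ≫ f = b ≫ g)
    (k : Y ⟶ W) : pb_lift f g hg a b w ≫ pb₂ f g hg ≫ k = b ≫ k := by
  rw [← Category.assoc, pb_lift₂]

theorem pb_ext {T : C} {t t' : T ⟶ pb f g hg} (h₁ : t ≫ pb₁ f g hg = t' ≫ pb₁ f g hg)
    (h₂ : t ≫ pb₂ f g hg = t' ≫ pb₂ f g hg) : t = t' :=
  pb_lift_unique f g hg t t' h₁ h₂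

theorem isPullback_pb : IsPullback (pb₁ f g hg) (pb₂ f g hg) f g where
  w := pb_comm f g hg
  isLimit' := ⟨PullbackCone.IsLimit.mk _ (fun s => pb_lift f g hg s.fst s.snd s.condition)
    (fun s => pb_lift₁ ..) (fun s => pb_lift₂ ..)
    (fun s m h₁ h₂ => pb_ext f g hg (by rw [h₁, pb_lift₁]) (by rw [h₂, pb_lift₂]))⟩

variable {f g} {P : C} {fst : P ⟶ X} {snd : P ⟶ Y}

theorem fib_of_isPullback (H : IsPullback fst snd f g) (hg : Fib g) : Fib fst := by
  rw [← H.isoIsPullback_hom_fst _ _ (isPullback_pb f g hg)]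
  exact fib_comp (iso_fib _) (pb_fib f g hg)

theorem weq_of_isPullback (H : IsPullback fst snd f g) (hg : Fib g) (hg' : Weq g) :
    Weq fst := by
  rw [← H.isoIsPullback_hom_fst _ _ (isPullback_pb f g hg)]
  exact weq_comp (iso_weq _) (pb_weq f g hg hg')

end Pullbacks

section Products

@[simp] theorem plift_fst_assoc {T X Y W : C} (a : T ⟶ X) (b : T ⟶ Y) (k : X ⟶ W) :
    plift a b ≫ pfst X Y ≫ k = a ≫ k := by
  rw [← Category.assoc, plift_fst]

@[simp] theorem plift_snd_assoc {T X Y W : C} (a : T ⟶ X) (b : T ⟶ Y) (k : Y ⟶ W) :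
    plift a b ≫ psnd X Y ≫ k = b ≫ k := by
  rw [← Category.assoc, plift_snd]

theorem prod_ext {T X Y : C} {t t' : T ⟶ prodObj X Y} (h₁ : t ≫ pfst X Y = t' ≫ pfst X Y)
    (h₂ : t ≫ psnd X Y = t' ≫ psnd X Y) : t = t' :=
  pb_ext _ _ _ h₁ h₂

theorem comp_plift {S T X Y : C} (x : S ⟶ T) (a : T ⟶ X) (b : T ⟶ Y) :
    x ≫ plift a b = plift (x ≫ a) (x ≫ b) := by
  apply prod_ext <;> simp

@[simp] theorem prodMap_fst {X X' Y Y' : C} (f : X ⟶ X') (g : Y ⟶ Y') :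
    prodMap f g ≫ pfst X' Y' = pfst X Y ≫ f := plift_fst _ _

@[simp] theorem prodMap_snd {X X' Y Y' : C} (f : X ⟶ X') (g : Y ⟶ Y') :
    prodMap f g ≫ psnd X' Y' = psnd X Y ≫ g := plift_snd _ _

@[simp] theorem prodMap_fst_assoc {X X' Y Y' W : C} (f : X ⟶ X') (g : Y ⟶ Y') (k : X' ⟶ W) :
    prodMap f g ≫ pfst X' Y' ≫ k = pfst X Y ≫ f ≫ k := by
  rw [← Category.assoc, prodMap_fst, Category.assoc]

@[simp] theorem prodMap_snd_assoc {X X' Y Y' W : C} (f : X ⟶ X') (g : Y ⟶ Y') (k : Y' ⟶ W) :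
    prodMap f g ≫ psnd X' Y' ≫ k = psnd X Y ≫ g ≫ k := by
  rw [← Category.assoc, prodMap_snd, Category.assoc]

theorem prodMap_comp {X X' X'' Y Y' Y'' : C} (f : X ⟶ X') (f' : X' ⟶ X'') (g : Y ⟶ Y')
    (g' : Y' ⟶ Y'') : prodMap f g ≫ prodMap f' g' = prodMap (f ≫ f') (g ≫ g') := by
  apply prod_ext <;> simp

@[simp] theorem pst_pfst (X : C) : pst X ≫ pfst X X = ps X := plift_fst _ _

@[simp] theorem pst_psnd (X : C) : pst X ≫ psnd X X = pt X := plift_snd _ _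

theorem isPullback_prod (X Y : C) :
    IsPullback (pfst X Y) (psnd X Y) (toTerm X) (toTerm Y) :=
  isPullback_pb _ _ _

theorem toTerm_comp {X Y : C} (f : X ⟶ Y) : f ≫ toTerm Y = toTerm X := toTerm_unique _

theorem isPullback_prodMap_fst {X Y : C} (f : X ⟶ Y) (W : C) :
    IsPullback (prodMap f (𝟙 W)) (pfst X W) (pfst Y W) f := by
  refine IsPullback.of_right (h₁₂ := psnd Y W) (h₂₂ := toTerm Y) ?_ (prodMap_fst _ _)
    (isPullback_prod Y W).flip
  simpa [toTerm_comp] using (isPullback_prod X W).flip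

theorem isPullback_prodMap_snd {X Y : C} (f : X ⟶ Y) (W : C) :
    IsPullback (prodMap (𝟙 W) f) (psnd W X) (psnd W Y) f := by
  refine IsPullback.of_right (h₁₂ := pfst W Y) (h₂₂ := toTerm Y) ?_ (prodMap_snd _ _)
    (isPullback_prod W Y)
  simpa [toTerm_comp] using isPullback_prod W X

theorem fib_psnd (X Y : C) : Fib (psnd X Y) :=
  fib_of_isPullback (isPullback_prod X Y).flip (toTerm_fib X)

theorem fib_ps (X : C) : Fib (ps X) := by
  rw [← pst_pfst]
  exact fib_comp (pstFib X) (pb_fib _ _ _)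

theorem weq_ps (X : C) : Weq (ps X) :=
  weq_of_precomp (pr_weq X) (by rw [pr_ps]; exact weq_id X)

theorem weq_pt (X : C) : Weq (pt X) :=
  weq_of_precomp (pr_weq X) (by rw [pr_pt]; exact weq_id X)

@[simp] theorem pr_ps_assoc {X W : C} (k : X ⟶ W) : pr X ≫ ps X ≫ k = k := by
  rw [← Category.assoc, pr_ps, Category.id_comp]

@[simp] theorem pr_pt_assoc {X W : C} (k : X ⟶ W) : pr X ≫ pt X ≫ k = k := by
  rw [← Category.assoc, pr_pt, Category.id_comp]

end Products

/-- The mapping path object `(A × B) ×_{B × B} P B` of `f : A ⟶ B`: a point `x` of `A` with a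
path from `f x`. -/
abbrev mapPath {A B : C} (f : A ⟶ B) : C := pb (prodMap f (𝟙 B)) (pst B) (pstFib B)

namespace mapPath

variable {A B : C} (f : A ⟶ B)

def src : mapPath f ⟶ A := pb₁ _ _ _ ≫ pfst A B

def tgt : mapPath f ⟶ B := pb₁ _ _ _ ≫ psnd A B

def path : mapPath f ⟶ P B := pb₂ _ _ _

def incl : A ⟶ mapPath f :=
  pb_lift _ _ _ (plift (𝟙 A) f) (f ≫ pr B) (by apply prod_ext <;> simp [pst])

@[simp] theorem incl_src : incl f ≫ src f = 𝟙 A := by simp [incl, src]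

@[simp] theorem incl_tgt : incl f ≫ tgt f = f := by simp [incl, tgt]

@[simp] theorem incl_tgt_assoc {W : C} (k : B ⟶ W) : incl f ≫ tgt f ≫ k = f ≫ k := by
  rw [← Category.assoc, incl_tgt]

theorem path_ps : path f ≫ ps B = src f ≫ f := by
  have := congrArg (· ≫ pfst B B) (pb_comm (prodMap f (𝟙 B)) (pst B) (pstFib B))
  simpa [path, src] using this.symm

theorem path_pt : path f ≫ pt B = tgt f := by
  have := congrArg (· ≫ psnd B B) (pb_comm (prodMap f (𝟙 B)) (pst B) (pstFib B))
  simpa [path, tgt] using this.symm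

theorem fib_tgt : Fib (tgt f) := fib_comp (pb_fib _ _ _) (fib_psnd A B)

/-- `src f` is a pullback of the acyclic fibration `ps B`. -/
theorem weq_src : Weq (src f) := by
  have H := (isPullback_pb (prodMap f (𝟙 B)) (pst B) (pstFib B)).flip.paste_vert
    (isPullback_prodMap_fst f B)
  rw [pst_pfst] at H
  exact weq_of_isPullback H.flip (fib_ps B) (weq_ps B)

theorem weq_incl : Weq (incl f) :=
  weq_of_postcomp (weq_src f) (by rw [incl_src]; exact weq_id A)

theorem weq_tgt {f : A ⟶ B} (hf : Weq f) : Weq (tgt f) :=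
  weq_of_precomp (weq_incl f) (by rw [incl_tgt]; exact hf)

end mapPath

section Lifting

variable {A B E D : C} {w : A ⟶ B} {p : E ⟶ D} {a : A ⟶ E} {b : B ⟶ D}

/-- Factor `(w, a) : A ⟶ B ×_D E` through its mapping path object. -/
theorem exists_factor_acyclicFib (hw : Weq w) (hp : Fib p) (comm : a ≫ p = w ≫ b) :
    ∃ (N : C) (j : A ⟶ N) (g : N ⟶ B) (e : N ⟶ E), Fib g ∧ Weq g ∧
      j ≫ g = w ∧ j ≫ e = a ∧ e ≫ p = g ≫ b := by
  let k := pb_lift b p hp w a comm.symm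
  have hjg : mapPath.incl k ≫ mapPath.tgt k ≫ pb₁ b p hp = w := by
    rw [← Category.assoc, mapPath.incl_tgt, pb_lift₁]
  refine ⟨mapPath k, mapPath.incl k, mapPath.tgt k ≫ pb₁ b p hp, mapPath.tgt k ≫ pb₂ b p hp,
    fib_comp (mapPath.fib_tgt k) (pb_fib b p hp),
    weq_of_precomp (mapPath.weq_incl k) (by rw [hjg]; exact hw), hjg, ?_, ?_⟩
  · rw [← Category.assoc, mapPath.incl_tgt, pb_lift₂]
  · rw [Category.assoc, Category.assoc, pb_comm]

theorem exists_lift (hw : Weq w) (hp : Fib p) (comm : a ≫ p = w ≫ b) :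
    ∃ d : B ⟶ E, d ≫ p = b := by
  obtain ⟨N, j, g, e, hg, hg', -, -, he⟩ := exists_factor_acyclicFib hw hp comm
  obtain ⟨σ, hσ⟩ := acyc_section g hg hg'
  exact ⟨σ ≫ e, by rw [Category.assoc, he, ← Category.assoc, hσ, Category.id_comp]⟩

end Lifting

def pbDiag {E D : C} (p : E ⟶ D) (hp : Fib p) : E ⟶ pb p p hp :=
  pb_lift p p hp (𝟙 E) (𝟙 E) rfl

namespace FibPathObj

variable {E D : C} {p : E ⟶ D} {hp : Fib p}

def st (Q : FibPathObj p hp) : Q.ob ⟶ pb p p hp := pb_lift p p hp Q.s Q.t Q.sp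

theorem r_st (Q : FibPathObj p hp) : Q.r ≫ Q.st = pbDiag p hp := by
  apply pb_ext <;> simp [st, pbDiag, Q.rs, Q.rt]

theorem fib_s (Q : FibPathObj p hp) : Fib Q.s := by
  have := fib_comp Q.stfib (pb_fib p p hp)
  rwa [pb_lift₁] at this

theorem weq_s (Q : FibPathObj p hp) : Weq Q.s :=
  weq_of_precomp Q.rweq (by rw [Q.rs]; exact weq_id E)

variable (p hp) in
theorem nonempty : Nonempty (FibPathObj p hp) := by
  let δ := pbDiag p hp
  have hst : pb_lift p p hp (mapPath.tgt δ ≫ pb₁ p p hp) (mapPath.tgt δ ≫ pb₂ p p hp)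
      (by simp only [Category.assoc, pb_comm]) = mapPath.tgt δ := by
    apply pb_ext <;> simp
  exact ⟨⟨mapPath δ, mapPath.incl δ, mapPath.tgt δ ≫ pb₁ p p hp, mapPath.tgt δ ≫ pb₂ p p hp,
    by simp [δ, pbDiag], by simp [δ, pbDiag], by simp only [Category.assoc, pb_comm],
    mapPath.weq_incl δ, hst ▸ mapPath.fib_tgt δ⟩⟩

end FibPathObj

namespace FibHomotopic

variable {E D A : C} {p : E ⟶ D} {hp : Fib p}

theorem refl (x : A ⟶ E) : FibHomotopic p hp x x := by
  obtain ⟨Q⟩ := FibPathObj.nonempty p hp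
  exact ⟨Q, x ≫ Q.r, by simp [Q.rs], by simp [Q.rt]⟩

theorem precomp {S : C} {x y : A ⟶ E} (z : S ⟶ A) (h : FibHomotopic p hp x y) :
    FibHomotopic p hp (z ≫ x) (z ≫ y) := by
  obtain ⟨Q, G, hs, ht⟩ := h
  exact ⟨Q, z ≫ G, by rw [Category.assoc, hs], by rw [Category.assoc, ht]⟩

/-- Lift along `w` against the fibration `Q.st`. -/
theorem of_weq_comp {B : C} {w : A ⟶ B} (hw : Weq w) {x y : B ⟶ E} (hxy : x ≫ p = y ≫ p)
    (h : FibHomotopic p hp (w ≫ x) (w ≫ y)) : FibHomotopic p hp x y := by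
  obtain ⟨Q, G, hs, ht⟩ := h
  obtain ⟨d, hd⟩ := exists_lift (a := G) (b := pb_lift p p hp x y hxy) hw Q.stfib
    (by apply pb_ext <;> simp [hs, ht])
  refine ⟨Q, d, ?_, ?_⟩
  · simpa using congrArg (· ≫ pb₁ p p hp) hd
  · simpa using congrArg (· ≫ pb₂ p p hp) hd

theorem of_weq_comp_eq {B : C} {w : A ⟶ B} (hw : Weq w) {x y : B ⟶ E}
    (hxy : x ≫ p = y ≫ p) (h : w ≫ x = w ≫ y) : FibHomotopic p hp x y :=
  of_weq_comp hw hxy (h ▸ refl _)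

theorem symm {x y : A ⟶ E} (h : FibHomotopic p hp x y) : FibHomotopic p hp y x := by
  obtain ⟨Q, G, hs, ht⟩ := h
  have hts : FibHomotopic p hp Q.t Q.s :=
    of_weq_comp_eq Q.rweq Q.sp.symm (by rw [Q.rs, Q.rt])
  simpa [hs, ht] using hts.precomp G

/-- Concatenate along the pullback `Q₁.ob ×_E Q₂.ob`, whose inclusion of constant paths is
a weak equivalence since `Q₂.s` is an acyclic fibration. -/
theorem trans {x y z : A ⟶ E} (h₁ : FibHomotopic p hp x y) (h₂ : FibHomotopic p hp y z) :
    FibHomotopic p hp x z := by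
  obtain ⟨Q₁, G₁, hs₁, ht₁⟩ := h₁
  obtain ⟨Q₂, G₂, hs₂, ht₂⟩ := h₂
  let π₁ := pb₁ Q₁.t Q₂.s Q₂.fib_s
  let π₂ := pb₂ Q₁.t Q₂.s Q₂.fib_s
  have hr : Weq (pb_lift Q₁.t Q₂.s Q₂.fib_s Q₁.r Q₂.r (by rw [Q₁.rt, Q₂.rs])) :=
    weq_of_postcomp (pb_weq _ _ _ Q₂.weq_s) (by rw [pb_lift₁]; exact Q₁.rweq)
  have hends : FibHomotopic p hp (π₁ ≫ Q₁.s) (π₂ ≫ Q₂.t) := by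
    refine of_weq_comp_eq hr ?_ (by simp [π₁, π₂, Q₁.rs, Q₂.rt])
    rw [Category.assoc, Q₁.sp, ← Category.assoc, pb_comm, Category.assoc, Q₂.sp,
      Category.assoc]
  have hxz := hends.precomp (pb_lift Q₁.t Q₂.s Q₂.fib_s G₁ G₂ (by rw [ht₁, hs₂]))
  simp only [π₁, π₂, pb_lift₁_assoc, pb_lift₂_assoc, hs₁, ht₂] at hxz
  exact hxz

theorem postcomp {M B' : C} {π : M ⟶ B'} {hπ : Fib π} {x y : A ⟶ M} (h : FibHomotopic π hπ x y)
    {φ : M ⟶ E} {b : B' ⟶ D} (hφ : φ ≫ p = π ≫ b) : FibHomotopic p hp (x ≫ φ) (y ≫ φ) := by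
  obtain ⟨Q, G, hs, ht⟩ := h
  have hst : FibHomotopic p hp (Q.s ≫ φ) (Q.t ≫ φ) := by
    refine of_weq_comp_eq Q.rweq ?_ (by simp only [← Category.assoc, Q.rs, Q.rt])
    rw [Category.assoc, hφ, ← Category.assoc, Q.sp, Category.assoc, Category.assoc, hφ]
  simpa only [← Category.assoc, hs, ht] using hst.precomp G

end FibHomotopic

theorem fibHomotopic_of_comp_eq {E D A : C} {p : E ⟶ D} (hp : Fib p) (hp' : Weq p)
    {x y : A ⟶ E} (hxy : x ≫ p = y ≫ p) : FibHomotopic p hp x y := by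
  have hδ : Weq (pbDiag p hp) :=
    weq_of_postcomp (pb_weq p p hp hp') (by rw [pbDiag, pb_lift₁]; exact weq_id E)
  have h := FibHomotopic.of_weq_comp_eq (hp := hp) hδ (pb_comm p p hp) (by simp [pbDiag])
  simpa using h.precomp (pb_lift p p hp x y hxy)

theorem exists_lift_fibHomotopic {A B E D : C} {w : A ⟶ B} {p : E ⟶ D} {a : A ⟶ E}
    {b : B ⟶ D} (hw : Weq w) (hp : Fib p) (comm : a ≫ p = w ≫ b) :
    ∃ d : B ⟶ E, d ≫ p = b ∧ FibHomotopic p hp (w ≫ d) a := by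
  obtain ⟨N, j, g, e, hg, hg', hjg, hje, he⟩ := exists_factor_acyclicFib hw hp comm
  obtain ⟨σ, hσ⟩ := acyc_section g hg hg'
  refine ⟨σ ≫ e, by rw [Category.assoc, he, ← Category.assoc, hσ, Category.id_comp], ?_⟩
  have hσj : FibHomotopic g hg (w ≫ σ) j :=
    fibHomotopic_of_comp_eq hg hg' (by rw [Category.assoc, hσ, Category.comp_id, hjg])
  simpa [hje] using hσj.postcomp (hp := hp) he

theorem FibHomotopic.exists_homotopy {E D A : C} {p : E ⟶ D} {hp : Fib p} {x y : A ⟶ E}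
    (h : FibHomotopic p hp x y) (Q' : FibPathObj p hp) :
    ∃ G : A ⟶ Q'.ob, G ≫ Q'.s = x ∧ G ≫ Q'.t = y := by
  obtain ⟨Q, G, hs, ht⟩ := h
  obtain ⟨c, hc⟩ := exists_lift (a := Q'.r) (b := pb_lift p p hp Q.s Q.t Q.sp) Q.rweq
    Q'.stfib (Q'.r_st.trans Q.r_st.symm)
  have hcs : c ≫ Q'.s = Q.s := by simpa using congrArg (· ≫ pb₁ p p hp) hc
  have hct : c ≫ Q'.t = Q.t := by simpa using congrArg (· ≫ pb₂ p p hp) hc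
  exact ⟨G ≫ c, by rw [Category.assoc, hcs, hs], by rw [Category.assoc, hct, ht]⟩

/-- Homotopy is fiberwise homotopy over the terminal object, witnessed by the chosen path
object. -/
def chosenPathObj (W : C) : FibPathObj (toTerm W) (toTerm_fib W) :=
  ⟨P W, pr W, ps W, pt W, pr_ps W, pr_pt W, by rw [toTerm_comp, toTerm_comp], pr_weq W,
    pst_fib W⟩

theorem homotopic_iff_fibHomotopic {T W : C} {f g : T ⟶ W} :
    Homotopic f g ↔ FibHomotopic (toTerm W) (toTerm_fib W) f g :=
  ⟨fun ⟨H, hs, ht⟩ => ⟨chosenPathObj W, H, hs, ht⟩,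
    fun h => h.exists_homotopy (chosenPathObj W)⟩

theorem Homotopic.trans {T W : C} {f g k : T ⟶ W} (h₁ : Homotopic f g) (h₂ : Homotopic g k) :
    Homotopic f k := by
  rw [homotopic_iff_fibHomotopic] at *
  exact h₁.trans h₂

theorem Homotopic.postcomp {T W W' : C} {f g : T ⟶ W} (h : Homotopic f g) (k : W ⟶ W') :
    Homotopic (f ≫ k) (g ≫ k) := by
  rw [homotopic_iff_fibHomotopic] at *
  exact h.postcomp (b := 𝟙 _) (by rw [toTerm_comp, Category.comp_id])

/-- Lift through the acyclic fibration `mapPath.tgt h`. -/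
theorem exists_homotopic_comp_of_weq {Y Z : C} {h : Y ⟶ Z} (hw : Weq h) {T : C} (u : T ⟶ Z) :
    ∃ a : T ⟶ Y, Homotopic (a ≫ h) u := by
  obtain ⟨σ, hσ⟩ := acyc_section _ (mapPath.fib_tgt h) (mapPath.weq_tgt hw)
  refine ⟨u ≫ σ ≫ mapPath.src h, u ≫ σ ≫ mapPath.path h, ?_, ?_⟩
  · simp only [Category.assoc, mapPath.path_ps]
  · rw [Category.assoc, Category.assoc, mapPath.path_pt, hσ, Category.comp_id]

/-- `F` is an action of `k` on paths, like the fillers `Pε` in `ExpFull`. -/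
structure IsPathMap {A B : C} (k : A ⟶ B) (F : P A ⟶ P B) : Prop where
  comp_ps : F ≫ ps B = ps A ≫ k
  comp_pt : F ≫ pt B = pt A ≫ k
  pr_comp : FibHomotopic (pst B) (pstFib B) (pr A ≫ F) (k ≫ pr B)

namespace IsPathMap

variable {A B W : C} {k : A ⟶ B} {F : P A ⟶ P B}

theorem comp_pst (hF : IsPathMap k F) : F ≫ pst B = pst A ≫ prodMap k k := by
  apply prod_ext <;> simp [pst, comp_plift, hF.comp_ps, hF.comp_pt]

theorem fibHomotopic {G : P A ⟶ P B} (hF : IsPathMap k F) (hG : IsPathMap k G) :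
    FibHomotopic (pst B) (pstFib B) F G :=
  FibHomotopic.of_weq_comp (pr_weq A) (by rw [hF.comp_pst, hG.comp_pst])
    (hF.pr_comp.trans hG.pr_comp.symm)

theorem comp {l : B ⟶ W} {G : P B ⟶ P W} (hF : IsPathMap k F) (hG : IsPathMap l G) :
    IsPathMap (k ≫ l) (F ≫ G) where
  comp_ps := by rw [Category.assoc, hG.comp_ps, ← Category.assoc, hF.comp_ps, Category.assoc]
  comp_pt := by rw [Category.assoc, hG.comp_pt, ← Category.assoc, hF.comp_pt, Category.assoc]
  pr_comp := by
    have h₁ := hF.pr_comp.postcomp (hp := pstFib W) hG.comp_pst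
    simp only [Category.assoc] at h₁ ⊢
    exact h₁.trans (hG.pr_comp.precomp k)

end IsPathMap

theorem exists_isPathMap {A B : C} (k : A ⟶ B) : ∃ F : P A ⟶ P B, IsPathMap k F := by
  obtain ⟨F, hF, hFr⟩ := exists_lift_fibHomotopic (a := k ≫ pr B)
    (b := plift (ps A ≫ k) (pt A ≫ k)) (pr_weq A) (pstFib B) (by apply prod_ext <;> simp [pst])
  exact ⟨F, by simpa [pst] using congrArg (· ≫ pfst B B) hF,
    by simpa [pst] using congrArg (· ≫ psnd B B) hF, hFr⟩

/-- A weak equivalence between fibrations over `B` is a fiberwise homotopy equivalence. -/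
theorem exists_fibHomotopic_lift_of_weq {A V B T : C} {pA : A ⟶ B} {pV : V ⟶ B} (hA : Fib pA)
    (hV : Fib pV) {c : A ⟶ V} (hc : Weq c) (hcp : c ≫ pV = pA) (x : T ⟶ V) :
    ∃ y : T ⟶ A, y ≫ pA = x ≫ pV ∧ FibHomotopic pV hV (y ≫ c) x := by
  obtain ⟨d, hd, hcd⟩ :=
    exists_lift_fibHomotopic (a := 𝟙 A) hc hA (by rw [Category.id_comp, hcp])
  have hdc : FibHomotopic pV hV (d ≫ c) (𝟙 V) := by
    refine FibHomotopic.of_weq_comp hc (by rw [Category.assoc, hcp, hd, Category.id_comp]) ?_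
    simpa only [Category.assoc, Category.comp_id, Category.id_comp] using
      hcd.postcomp (hp := hV) (b := 𝟙 B) (by rw [hcp, Category.comp_id])
  refine ⟨x ≫ d, by rw [Category.assoc, hd], ?_⟩
  simpa only [Category.assoc, Category.comp_id] using hdc.precomp x

/-- The second endpoint `(Y × Y) ×_{Z × Z} P Z ⟶ Y` is a pullback of the acyclic fibration
`mapPath.tgt h` along `h`, via `h × h = (1 × h) ≫ (h × 1)`. -/
theorem weq_pb_prodMap_pst_snd {Y Z : C} {h : Y ⟶ Z} (hw : Weq h) :
    Weq (pb₁ (prodMap h h) (pst Z) (pstFib Z) ≫ psnd Y Y) := by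
  have hcomp : prodMap (𝟙 Y) h ≫ prodMap h (𝟙 Z) = prodMap h h := by
    rw [prodMap_comp, Category.id_comp, Category.comp_id]
  let ν : pb (prodMap h h) (pst Z) (pstFib Z) ⟶ mapPath h :=
    pb_lift _ _ _ (pb₁ _ _ _ ≫ prodMap (𝟙 Y) h) (pb₂ _ _ _)
      (by rw [Category.assoc, hcomp, pb_comm])
  have hsq : IsPullback ν (pb₁ _ _ _) (pb₁ _ _ _) (prodMap (𝟙 Y) h) := by
    refine IsPullback.of_right ?_ (pb_lift₁ ..) (isPullback_pb _ _ _).flip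
    rw [pb_lift₂, hcomp]
    exact (isPullback_pb _ _ _).flip
  have H := (hsq.paste_vert (isPullback_prodMap_snd h Y)).flip
  exact weq_of_isPullback H (mapPath.fib_tgt h) (mapPath.weq_tgt hw)

theorem exists_path_lift_of_weq {Y Z : C} {h : Y ⟶ Z} (hw : Weq h) {Ph : P Y ⟶ P Z}
    (hPh : Ph ≫ pst Z = pst Y ≫ prodMap h h) {T : C} {a b : T ⟶ Y} (H : T ⟶ P Z)
    (Hs : H ≫ ps Z = a ≫ h) (Ht : H ≫ pt Z = b ≫ h) :
    ∃ HY : T ⟶ P Y, HY ≫ ps Y = a ∧ HY ≫ pt Y = b ∧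
      FibHomotopic (pst Z) (pstFib Z) (HY ≫ Ph) H := by
  let c := pb_lift (prodMap h h) (pst Z) (pstFib Z) (pst Y) Ph hPh.symm
  have hc : Weq c := weq_of_postcomp (weq_pb_prodMap_pst_snd hw) (by simpa [c] using weq_pt Y)
  obtain ⟨HY, hHY, hrel⟩ := exists_fibHomotopic_lift_of_weq (pstFib Y) (pb_fib _ _ _) hc
    (pb_lift₁ ..) (pb_lift (prodMap h h) (pst Z) (pstFib Z) (plift a b) H
      (by apply prod_ext <;> simp [pst, comp_plift, Hs, Ht]))
  refine ⟨HY, by rw [← pst_pfst, ← Category.assoc, hHY]; simp,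
    by rw [← pst_psnd, ← Category.assoc, hHY]; simp, ?_⟩
  simpa [c] using hrel.postcomp (hp := pstFib Z) (pb_comm _ _ _).symm

end PathCat

open PathCat

/-- Stability of weak/strong homotopy exponentials under weak equivalences on the
target. -/
theorem exp_stable_weq_target
    {C : Type u} [Category.{v} C] [PathCat C] (X Y Z E : C)
    (ε : prodObj E X ⟶ Y) (h : Y ⟶ Z) (hw : PathCat.Weq h) :
    (IsWeakExp X Y E ε → IsWeakExp X Z E (ε ≫ h)) ∧
    (IsStrongExp X Y E ε → IsStrongExp X Z E (ε ≫ h)) := by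
  have weak : IsWeakExp X Y E ε → IsWeakExp X Z E (ε ≫ h) := by
    intro hε T u
    obtain ⟨a, ha⟩ := exists_homotopic_comp_of_weq hw u
    obtain ⟨v, hv⟩ := hε T a
    exact ⟨v, by simpa only [Category.assoc] using (hv.postcomp h).trans ha⟩
  refine ⟨weak, fun ⟨hε, hfull⟩ => ⟨weak hε, ?_⟩⟩
  intro T θ θs θt θr PεZ PεZs PεZt PεZr v v' H Hs Ht
  obtain ⟨Ph, hPh⟩ := exists_isPathMap h
  obtain ⟨PεY, hPεY⟩ := exists_isPathMap ε
  obtain ⟨HY, hHYs, hHYt, hHY⟩ := exists_path_lift_of_weq hw hPh.comp_pst H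
    (by rw [Hs, Category.assoc]) (by rw [Ht, Category.assoc])
  obtain ⟨K, hKs, hKt, hK⟩ := hfull T θ θs θt θr PεY hPεY.comp_ps hPεY.comp_pt hPεY.pr_comp
    v v' HY hHYs hHYt
  refine ⟨K, hKs, hKt, ?_⟩
  have hPε : FibHomotopic (pst Z) (pstFib Z) PεZ (PεY ≫ Ph) :=
    IsPathMap.fibHomotopic ⟨PεZs, PεZt, PεZr⟩ (hPεY.comp hPh)
  have h₁ := hPε.precomp (plift (pfst T X ≫ K) (psnd T X ≫ pr X) ≫ θ)
  have h₂ := hK.postcomp (hp := pstFib Z) hPh.comp_pst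
  simp only [Category.assoc] at h₁ h₂
  exact (h₁.trans h₂).trans hHY
end
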